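/- arXiv:1605.05123 — 2 statements merged into one kernel-verified Lean document; each statement's English description precedes it below -/
import Mathlib

section
/- Let G be a simple graph, v a vertex, and (s_1, …, s_r) a length-r valid sequence for v in G with graph sequence G_1 = G, G_{i+1} = G_i + (s_i, v). Then the local girth of v in the final graph satisfies g_v(G_{r+1}) = min( g_v(G), min_{1 ≤ i ≤ r} g_{{s_i,v}}(G_{i+1}) ), and moreover for each 1 ≤ i ≤ r the edge local girth satisfies g_{{s_i,v}}(G_{i+1}) = dist_{G_i}(s_i, v) + 1. -/
open SimpleGraph

variable {V : Type*}

/-- `G + (c,v)`: the graph obtained from `G` by adding the edge `{c, v}`. -/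
def addEdge (G : SimpleGraph V) (c v : V) : SimpleGraph V :=
  G ⊔ SimpleGraph.fromEdgeSet {s(c, v)}

/-- The local girth of a vertex `v`: the infimum (in `ℕ∞`) of the lengths of
cycles of `G` passing through `v`. -/
noncomputable def localGirth (G : SimpleGraph V) (v : V) : ℕ∞ :=
  ⨅ (a : V) (w : G.Walk a a) (_ : w.IsCycle) (_ : v ∈ w.support), (w.length : ℕ∞)

/-- The edge local girth of `e`: the infimum (in `ℕ∞`) of the lengths of
cycles of `G` containing the edge `e`. -/
noncomputable def edgeLocalGirth (G : SimpleGraph V) (e : Sym2 V) : ℕ∞ :=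
  ⨅ (a : V) (w : G.Walk a a) (_ : w.IsCycle) (_ : e ∈ w.edges), (w.length : ℕ∞)

/-- A length-`r` valid sequence for `v` in `G`: pairwise distinct vertices,
each distinct from `v` and not adjacent to `v` in `G`. -/
def ValidSeq (G : SimpleGraph V) (v : V) {r : ℕ} (s : Fin r → V) : Prop :=
  Function.Injective s ∧ ∀ i, s i ≠ v ∧ ¬ G.Adj (s i) v

/-- The graph sequence of a sequence `s`: `graphSeq G v s 0 = G₁ = G` and
`graphSeq G v s i = G_{i+1} = G_i + (s_i, v)`. -/
def graphSeq (G : SimpleGraph V) (v : V) {r : ℕ} (s : Fin r → V) : ℕ → SimpleGraph V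
  | 0 => G
  | i + 1 => if h : i < r then addEdge (graphSeq G v s i) (s ⟨i, h⟩) v else graphSeq G v s i

/-- The `r`-edge local girth of `v` in `G`: the supremum, over all length-`r`
valid sequences `s` for `v`, of the local girth of `v` in the final graph. -/
noncomputable def multiEdgeLocalGirth (G : SimpleGraph V) (v : V) (r : ℕ) : ℕ∞ :=
  ⨆ (s : Fin r → V) (_ : ValidSeq G v s), localGirth (graphSeq G v s r) v

/-- The `r`-edge local girth of `c` with respect to `v`:
`g_v(G+(c,v))` if `r = 1`, and `g_v^{(r-1)}(G+(c,v))` if `r ≥ 2`. -/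
noncomputable def cnMultiEdgeLocalGirth (G : SimpleGraph V) (c v : V) (r : ℕ) : ℕ∞ :=
  if r = 1 then localGirth (addEdge G c v) v
  else multiEdgeLocalGirth (addEdge G c v) v (r - 1)

/-!
A cycle through `v` in `G + (c, v)` either avoids the new edge, and then is a cycle of `G`, or
contains it; hence `g_v(G + (c, v)) = min (g_v(G), g_{cv}(G + (c, v)))`, and the first formula
follows by adding the edges one at a time. A shortest cycle through the new edge `{c, v}` is that
edge followed by a shortest `c`–`v` path of `G`: conversely, a closed trail through `c` and `v`
splits at these two vertices into two `c`–`v` walks of positive length, and at most one of them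
uses the new edge.
-/

lemma addEdge_adj {H : SimpleGraph V} {c v a b : V} :
    (addEdge H c v).Adj a b ↔ H.Adj a b ∨ s(a, b) = s(c, v) ∧ a ≠ b := by
  simp [addEdge]

lemma le_addEdge (H : SimpleGraph V) (c v : V) : H ≤ addEdge H c v := le_sup_left

lemma mem_edgeSet_of_mem_edges_addEdge {H : SimpleGraph V} {c v a b : V}
    {w : (addEdge H c v).Walk a b} (he : s(c, v) ∉ w.edges) :
    ∀ f ∈ w.edges, f ∈ H.edgeSet := by
  intro f hf
  induction f with
  | _ x y =>
    rcases addEdge_adj.mp (w.edges_subset_edgeSet hf) with hxy | ⟨hxy, -⟩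
    · exact hxy
    · exact absurd (hxy ▸ hf) he

section Girth

variable {G H : SimpleGraph V} {v a : V} {e : Sym2 V}

lemma le_localGirth {n : ℕ∞}
    (h : ∀ a (w : G.Walk a a), w.IsCycle → v ∈ w.support → n ≤ w.length) :
    n ≤ localGirth G v :=
  le_iInf fun a => le_iInf fun w => le_iInf fun hw => le_iInf fun hv => h a w hw hv

lemma le_edgeLocalGirth {n : ℕ∞}
    (h : ∀ a (w : G.Walk a a), w.IsCycle → e ∈ w.edges → n ≤ w.length) :
    n ≤ edgeLocalGirth G e :=
  le_iInf fun a => le_iInf fun w => le_iInf fun hw => le_iInf fun he => h a w hw he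

lemma localGirth_le {w : G.Walk a a} (hw : w.IsCycle) (hv : v ∈ w.support) :
    localGirth G v ≤ w.length :=
  iInf_le_of_le a <| iInf_le_of_le w <| iInf_le_of_le hw <| iInf_le _ hv

lemma localGirth_le_of_edges_subset {w : H.Walk a a} (hw : w.IsCycle) (hv : v ∈ w.support)
    (hsub : ∀ f ∈ w.edges, f ∈ G.edgeSet) : localGirth G v ≤ w.length :=
  w.length_transfer hsub ▸ localGirth_le (hw.transfer hsub) (by rwa [Walk.support_transfer])

lemma edgeLocalGirth_le {w : G.Walk a a} (hw : w.IsCycle) (he : e ∈ w.edges) :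
    edgeLocalGirth G e ≤ w.length :=
  iInf_le_of_le a <| iInf_le_of_le w <| iInf_le_of_le hw <| iInf_le _ he

lemma localGirth_anti (h : G ≤ H) : localGirth H v ≤ localGirth G v :=
  le_localGirth fun _ w hw hv =>
    localGirth_le_of_edges_subset hw hv fun _ hf => edgeSet_mono h (w.edges_subset_edgeSet hf)

lemma localGirth_le_edgeLocalGirth (hv : v ∈ e) : localGirth G v ≤ edgeLocalGirth G e :=
  le_edgeLocalGirth fun _ w hw he => localGirth_le hw (w.mem_support_of_mem_edges he hv)

end Girth

lemma localGirth_addEdge (H : SimpleGraph V) (c v : V) :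
    localGirth (addEdge H c v) v =
      min (localGirth H v) (edgeLocalGirth (addEdge H c v) s(c, v)) := by
  refine le_antisymm (le_min (localGirth_anti (le_addEdge H c v))
    (localGirth_le_edgeLocalGirth (Sym2.mem_mk_right c v))) (le_localGirth fun a w hw hv => ?_)
  by_cases he : s(c, v) ∈ w.edges
  · exact (min_le_right _ _).trans (edgeLocalGirth_le hw he)
  · exact (min_le_left _ _).trans
      (localGirth_le_of_edges_subset hw hv (mem_edgeSet_of_mem_edges_addEdge he))

lemma edist_le_length_of_notMem_edges {H : SimpleGraph V} {c v a b : V}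
    {w : (addEdge H c v).Walk a b} (he : s(c, v) ∉ w.edges) : H.edist a b ≤ w.length :=
  (edist_le (w.transfer H (mem_edgeSet_of_mem_edges_addEdge he))).trans_eq (by simp)

lemma edgeLocalGirth_addEdge_le (H : SimpleGraph V) {c v : V} (hcv : c ≠ v) (hadj : ¬H.Adj c v)
    (p : H.Walk c v) : edgeLocalGirth (addEdge H c v) s(c, v) ≤ p.length + 1 := by
  classical
  let q : (addEdge H c v).Path c v :=
    ⟨p.bypass.mapLe (le_addEdge H c v), (Walk.isPath_mapLe _).mpr p.bypass_isPath⟩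
  have hvc : (addEdge H c v).Adj v c := addEdge_adj.mpr (Or.inr ⟨Sym2.eq_swap, hcv.symm⟩)
  have hq : s(v, c) ∉ q.1.edges := by
    rw [Walk.edges_mapLe_eq_edges, Sym2.eq_swap]
    exact fun h => hadj (p.bypass.edges_subset_edgeSet h)
  calc edgeLocalGirth (addEdge H c v) s(c, v)
      ≤ (Walk.cons hvc q.1).length :=
        edgeLocalGirth_le (Path.cons_isCycle q hvc hq) (by simp [Sym2.eq_swap])
    _ ≤ p.length + 1 := by
        simpa [q, Walk.length_mapLe] using p.length_bypass_le_length

lemma edist_add_one_le_length {H : SimpleGraph V} {c v : V} (hcv : c ≠ v)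
    {w : (addEdge H c v).Walk c c} (hw : w.IsTrail) (hv : v ∈ w.support) :
    H.edist c v + 1 ≤ w.length := by
  classical
  set p := w.takeUntil v hv
  set q := w.dropUntil v hv
  have hlen : w.length = p.length + q.length := by
    rw [← Walk.length_append, Walk.take_spec]
  have hp : 1 ≤ p.length := Nat.one_le_iff_ne_zero.mpr fun h => hcv (Walk.eq_of_length_eq_zero h)
  have hq : 1 ≤ q.length :=
    Nat.one_le_iff_ne_zero.mpr fun h => hcv (Walk.eq_of_length_eq_zero h).symm
  rw [hlen, Nat.cast_add]
  by_cases he : s(c, v) ∈ p.edges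
  · rw [edist_comm, add_comm (p.length : ℕ∞)]
    exact add_le_add (edist_le_length_of_notMem_edges
      (hw.disjoint_edges_takeUntil_dropUntil hv he)) (by exact_mod_cast hp)
  · exact add_le_add (edist_le_length_of_notMem_edges he) (by exact_mod_cast hq)

lemma edgeLocalGirth_addEdge (H : SimpleGraph V) {c v : V} (hcv : c ≠ v) (hadj : ¬H.Adj c v) :
    edgeLocalGirth (addEdge H c v) s(c, v) = H.edist c v + 1 := by
  classical
  refine le_antisymm ?_ (le_edgeLocalGirth fun a w hw he => ?_)
  · by_cases hr : H.Reachable c v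
    · obtain ⟨p, hp⟩ := hr.exists_walk_length_eq_edist
      exact hp ▸ edgeLocalGirth_addEdge_le H hcv hadj p
    · simp [edist_eq_top_of_not_reachable hr]
  · have hc : c ∈ w.support := w.fst_mem_support_of_mem_edges he
    have hv : v ∈ (w.rotate c hc).support :=
      Walk.snd_mem_support_of_mem_edges _ ((w.rotate_edges c hc).mem_iff.mpr he)
    rw [← w.length_rotate c hc]
    exact edist_add_one_le_length hcv (hw.isTrail.rotate hc) hv

section GraphSeq

variable (G : SimpleGraph V) (v : V) {r : ℕ} (s : Fin r → V)

lemma graphSeq_succ (i : Fin r) :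
    graphSeq G v s (i.1 + 1) = addEdge (graphSeq G v s i) (s i) v :=
  dif_pos i.isLt

lemma graphSeq_succ_of_le {k : ℕ} (hk : r ≤ k) : graphSeq G v s (k + 1) = graphSeq G v s k :=
  dif_neg (by omega)

variable {G v s}

lemma not_adj_graphSeq (hs : ValidSeq G v s) (i : Fin r) {k : ℕ} (hk : k ≤ i.1) :
    ¬(graphSeq G v s k).Adj (s i) v := by
  induction k with
  | zero => exact (hs.2 i).2
  | succ k ih =>
    have hkr : k < r := by omega
    rw [graphSeq_succ G v s ⟨k, hkr⟩, addEdge_adj]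
    rintro (h | ⟨h, -⟩)
    · exact ih (by omega) h
    · rcases Sym2.eq_iff.mp h with ⟨h, -⟩ | ⟨h, -⟩
      · exact Fin.ne_of_val_ne (by dsimp only; omega) (hs.1 h)
      · exact (hs.2 i).1 h

end GraphSeq

lemma localGirth_graphSeq (G : SimpleGraph V) (v : V) {r : ℕ} (s : Fin r → V) (k : ℕ) :
    localGirth (graphSeq G v s k) v =
      min (localGirth G v)
        (⨅ (i : Fin r) (_ : i.1 < k), edgeLocalGirth (graphSeq G v s (i.1 + 1)) s(s i, v)) := by
  induction k with
  | zero => simp [graphSeq]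
  | succ k ih =>
    set f := fun i : Fin r => edgeLocalGirth (graphSeq G v s (i.1 + 1)) s(s i, v)
    by_cases hk : k < r
    · have hiff : ∀ i : Fin r, i.1 < k + 1 ↔ i.1 < k ∨ i = ⟨k, hk⟩ := fun i => by
        simp only [Fin.ext_iff]; omega
      have hsplit : ⨅ (i : Fin r) (_ : i.1 < k + 1), f i =
          min (⨅ (i : Fin r) (_ : i.1 < k), f i) (f ⟨k, hk⟩) := by
        simp only [hiff, iInf_or, iInf_inf_eq, iInf_iInf_eq_left]
      have hstep := localGirth_addEdge (graphSeq G v s k) (s ⟨k, hk⟩) v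
      rw [← graphSeq_succ G v s ⟨k, hk⟩] at hstep
      rw [hsplit, ← min_assoc, ← ih, hstep]
    · have hiff : ∀ i : Fin r, i.1 < k + 1 ↔ i.1 < k := fun i => by omega
      simp only [hiff, graphSeq_succ_of_le G v s (not_lt.mp hk), ih]

theorem stmt_3_general (G : SimpleGraph V) (v : V) {r : ℕ}
    (s : Fin r → V) (hs : ValidSeq G v s) :
    localGirth (graphSeq G v s r) v =
      min (localGirth G v)
        (⨅ i : Fin r, edgeLocalGirth (graphSeq G v s (i.1 + 1)) s(s i, v)) ∧
    ∀ i : Fin r,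
      edgeLocalGirth (graphSeq G v s (i.1 + 1)) s(s i, v) =
        (graphSeq G v s i.1).edist (s i) v + 1 := by
  refine ⟨by simpa using localGirth_graphSeq G v s r, fun i => ?_⟩
  rw [graphSeq_succ, edgeLocalGirth_addEdge _ (hs.2 i).1 (not_adj_graphSeq hs i le_rfl)]

/-- For a length-`r` valid sequence `(s_1, …, s_r)` for `v` in `G` with graph
sequence `G_1 = G`, `G_{i+1} = G_i + (s_i, v)`:
`g_v(G_{r+1}) = min(g_v(G), min_{1 ≤ i ≤ r} g_{{s_i,v}}(G_{i+1}))`, and for each `i`,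
`g_{{s_i,v}}(G_{i+1}) = dist_{G_i}(s_i, v) + 1`. -/
theorem stmt_3 (G : SimpleGraph V) (v : V) {r : ℕ} (hr : 1 ≤ r)
    (s : Fin r → V) (hs : ValidSeq G v s) :
    localGirth (graphSeq G v s r) v =
      min (localGirth G v)
        (⨅ i : Fin r, edgeLocalGirth (graphSeq G v s (i.1 + 1)) s(s i, v)) ∧
    ∀ i : Fin r,
      edgeLocalGirth (graphSeq G v s (i.1 + 1)) s(s i, v) =
        (graphSeq G v s i.1).edist (s i) v + 1 :=
  stmt_3_general G v s hs
end

section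
/- Let G be a simple graph and let c, v be distinct vertices with ¬G.Adj c v, and assume dist_G(c,v) + 1 ≤ g_v(G). Then in the graph G+(c,v), the local girth of v equals the infimum of the lengths of cycles containing the edge {c,v}, and both equal dist_G(c,v) + 1; that is, adding the edge {c,v} makes v attain the local girth dist_G(c,v) + 1. -/
open SimpleGraph

variable {V : Type*}

/-!
A cycle of `G + (c,v)` through `v` either avoids the new edge, and is then a cycle of `G` of
length at least `g_v(G) ≥ dist_G(c,v) + 1`, or uses it, and then the rest of the cycle is a walk
from `c` to `v` in `G`, of length at least `dist_G(c,v)`. Conversely, a shortest path of `G`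
from `c` to `v` closed up by the new edge is a cycle through `{c,v}` of length
`dist_G(c,v) + 1`, and every cycle through the edge `{c,v}` passes through `v`.
-/

namespace SimpleGraph

variable {G H : SimpleGraph V}

section Girth

variable {v : V} {n : ℕ∞}

theorem localGirth_le {a : V} {w : G.Walk a a} (hw : w.IsCycle) (hv : v ∈ w.support) :
    localGirth G v ≤ w.length :=
  iInf_le_of_le a <| iInf_le_of_le w <| iInf_le_of_le hw <| iInf_le_of_le hv le_rfl

theorem le_localGirth
    (h : ∀ (a : V) (w : G.Walk a a), w.IsCycle → v ∈ w.support → n ≤ w.length) :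
    n ≤ localGirth G v := by
  simpa only [localGirth, le_iInf_iff] using h

theorem edgeLocalGirth_le {e : Sym2 V} {a : V} {w : G.Walk a a} (hw : w.IsCycle)
    (he : e ∈ w.edges) : edgeLocalGirth G e ≤ w.length :=
  iInf_le_of_le a <| iInf_le_of_le w <| iInf_le_of_le hw <| iInf_le_of_le he le_rfl

theorem localGirth_anti (h : G ≤ H) : localGirth H v ≤ localGirth G v :=
  le_localGirth fun _ w hw hv => by
    simpa using localGirth_le (hw.mapLe h) (by simpa using hv)

theorem localGirth_le_edgeLocalGirth (u : V) : localGirth G v ≤ edgeLocalGirth G s(u, v) := by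
  simp only [edgeLocalGirth, le_iInf_iff]
  exact fun _ w hw he => localGirth_le hw (w.snd_mem_support_of_mem_edges he)

end Girth

theorem Walk.edist_deleteEdge_le {u w : V} (p : G.Walk u w) (hp : s(u, w) ∉ p.edges) :
    (G.deleteEdges {s(u, w)}).edist u w ≤ p.length := by
  simpa using edist_le (p.toDeleteEdge _ hp)

theorem Walk.one_le_length_of_mem_edges {u w : V} {p : G.Walk u w} {e : Sym2 V}
    (he : e ∈ p.edges) : (1 : ℕ∞) ≤ p.length := by
  rw [← p.length_edges]
  exact_mod_cast List.length_pos_of_mem he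

-- The rest of the cycle is a walk between `u` and `w` avoiding `s(u, w)`.
theorem Walk.IsCycle.edist_deleteEdge_add_one_le {a u w : V} {p : G.Walk a a} (hp : p.IsCycle)
    (he : s(u, w) ∈ p.edges) : (G.deleteEdges {s(u, w)}).edist u w + 1 ≤ p.length := by
  classical
  have hu := p.fst_mem_support_of_mem_edges he
  set q := p.rotate u hu
  have hq_edges : q.edges.Perm p.edges := (p.rotate_edges u hu).perm
  have hq_len : q.length = p.length := by
    rw [← Walk.length_edges, ← Walk.length_edges, hq_edges.length_eq]
  have hqe : s(u, w) ∈ q.edges := hq_edges.mem_iff.mpr he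
  have hw := q.snd_mem_support_of_mem_edges hqe
  obtain ⟨t, d, ht, hd⟩ : ∃ (t : G.Walk u w) (d : G.Walk w u),
      t.length + d.length = q.length ∧ t.edges ++ d.edges = q.edges :=
    ⟨_, _, by rw [← Walk.length_append, q.take_spec hw],
      by rw [← Walk.edges_append, q.take_spec hw]⟩
  have hnodup : (t.edges ++ d.edges).Nodup := hd ▸ (hp.rotate hu).edges_nodup
  rw [← hq_len, ← ht, Nat.cast_add]
  rcases List.mem_append.mp (hd ▸ hqe) with het | hed
  · have hd' : s(u, w) ∉ d.reverse.edges := by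
      simpa using fun h => List.disjoint_of_nodup_append hnodup het h
    calc _ ≤ (d.length : ℕ∞) + t.length := by
          simpa using add_le_add (d.reverse.edist_deleteEdge_le hd')
            (one_le_length_of_mem_edges het)
      _ = _ := add_comm _ _
  · have ht' : s(u, w) ∉ t.edges := fun h => List.disjoint_of_nodup_append hnodup h hed
    exact add_le_add (t.edist_deleteEdge_le ht') (one_le_length_of_mem_edges hed)

section AddEdge

variable {c v : V}

theorem le_addEdge (G : SimpleGraph V) (c v : V) : G ≤ addEdge G c v := le_sup_left

theorem deleteEdges_addEdge_le : (addEdge G c v).deleteEdges {s(c, v)} ≤ G := by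
  rw [deleteEdges, addEdge, sup_sdiff_right_self]
  exact sdiff_le

theorem addEdge_adj_self (hne : c ≠ v) : (addEdge G c v).Adj v c :=
  Or.inr <| (fromEdgeSet_adj _).mpr ⟨Sym2.eq_swap, hne.symm⟩

theorem edgeLocalGirth_addEdge_le (hne : c ≠ v) (hadj : ¬G.Adj c v) :
    edgeLocalGirth (addEdge G c v) s(c, v) ≤ G.edist c v + 1 := by
  classical
  by_cases hr : G.Reachable c v
  swap
  · simp [edist_eq_top_of_not_reachable hr]
  obtain ⟨p, hp⟩ := hr.exists_walk_length_eq_edist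
  let q := p.bypass.mapLe (le_addEdge G c v)
  have hq : s(v, c) ∉ q.edges := by
    simpa [q, Sym2.eq_swap] using fun h => hadj (p.bypass.edges_subset_edgeSet h)
  have hcycle : (Walk.cons (addEdge_adj_self hne) q).IsCycle :=
    (Walk.cons_isCycle_iff _ _).mpr ⟨p.bypass_isPath.mapLe _, hq⟩
  calc edgeLocalGirth (addEdge G c v) s(c, v)
      ≤ (Walk.cons (addEdge_adj_self hne) q).length := edgeLocalGirth_le hcycle (by simp)
    _ ≤ G.edist c v + 1 := by
      rw [Walk.length_cons, Walk.length_mapLe, ← hp, Nat.cast_add, Nat.cast_one]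
      gcongr
      exact p.length_bypass_le_length

theorem edist_add_one_le_localGirth_addEdge (hg : G.edist c v + 1 ≤ localGirth G v) :
    G.edist c v + 1 ≤ localGirth (addEdge G c v) v := by
  refine le_localGirth fun a w hw hv => ?_
  by_cases he : s(c, v) ∈ w.edges
  · calc G.edist c v + 1 ≤ ((addEdge G c v).deleteEdges {s(c, v)}).edist c v + 1 := by
          gcongr; exact deleteEdges_addEdge_le
      _ ≤ w.length := hw.edist_deleteEdge_add_one_le he
  · calc G.edist c v + 1 ≤ localGirth G v := hg
      _ ≤ localGirth ((addEdge G c v).deleteEdges {s(c, v)}) v :=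
          localGirth_anti deleteEdges_addEdge_le
      _ ≤ w.length := by
          have hw' := hw.toDeleteEdges _ {s(c, v)} fun _ h' => by rintro rfl; exact he h'
          simpa using localGirth_le hw' (by simpa using hv)

end AddEdge

end SimpleGraph

/-- If `c ≠ v` are non-adjacent in `G` and `dist_G(c,v) + 1 ≤ g_v(G)`,
then in `G+(c,v)` the local girth of `v` equals the infimum of the lengths of cycles
containing the edge `{c,v}`, and both equal `dist_G(c,v) + 1`. -/
theorem stmt_13 (G : SimpleGraph V) (c v : V) (hne : c ≠ v) (hadj : ¬ G.Adj c v)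
    (hg : G.edist c v + 1 ≤ localGirth G v) :
    localGirth (addEdge G c v) v = edgeLocalGirth (addEdge G c v) s(c, v) ∧
    edgeLocalGirth (addEdge G c v) s(c, v) = G.edist c v + 1 := by
  have hlow := edist_add_one_le_localGirth_addEdge hg
  have hmid := localGirth_le_edgeLocalGirth (G := addEdge G c v) (v := v) c
  have hup := edgeLocalGirth_addEdge_le hne hadj
  exact ⟨hmid.antisymm (hup.trans hlow), hup.antisymm (hlow.trans hmid)⟩
end
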